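/- arXiv:1806.10887 — 3 statements merged into one kernel-verified Lean document; each statement's English description precedes it below -/
import Mathlib

section
/- Let 0 < a < z_0, α > 0 with α ≠ 1, and let Φ : [0,1] → ℝ be continuous with sup norm ‖Φ‖_∞. Define for continuous g : [a, z_0] → ℝ the operator G[g](x) = (α z_0 / x^α) ∫_{z_0}^{x} (z/(z_0 - z))^α ∫_{z}^{z_0} Φ(z/z') (z')^{-2} (z_0 - z')^{α-1} g(z') dz' dz for x ∈ [a, z_0]. Then ‖G[g]‖_∞ ≤ (1/|α - 1|) ‖Φ‖_∞ | z_0/a - (z_0/a)^α | · ‖g‖_∞. -/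
open MeasureTheory intervalIntegral Set

/-!
Bound the integrands pointwise. On `z ≤ z' ≤ z0` one has `|Φ (z / z')| ≤ ‖Φ‖`, `z' ^ (-2) ≤ z ^ (-2)`
and `∫_z^{z0} (z0 - z') ^ (α - 1) dz' = (z0 - z) ^ α / α`, so the inner integral is at most
`‖Φ‖ ‖g‖ z ^ (-2) (z0 - z) ^ α / α`. The factor `(z0 - z) ^ α` cancels the singular weight
`(z / (z0 - z)) ^ α`, leaving `‖Φ‖ ‖g‖ z ^ (α - 2) / α` to integrate over `[x, z0]`. After multiplying
by `α z0 / x ^ α` the result is `‖Φ‖ ‖g‖ |t ^ α - t| / |α - 1|` with `t = z0 / x ∈ [1, z0 / a]`,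
and `t ↦ |t ^ α - t| = t |t ^ (α - 1) - 1|` is increasing on `[1, ∞)`.
-/

lemma integral_sub_rpow_sub_one (z z0 : ℝ) {α : ℝ} (hα : 0 < α) :
    ∫ t in z..z0, (z0 - t) ^ (α - 1) = (z0 - z) ^ α / α := by
  rw [integral_comp_sub_left (fun u : ℝ => u ^ (α - 1)), sub_self,
    integral_rpow (Or.inl (by linarith)), sub_add_cancel, Real.zero_rpow hα.ne']
  ring

lemma intervalIntegrable_sub_rpow_sub_one (z z0 : ℝ) {α : ℝ} (hα : 0 < α) :
    IntervalIntegrable (fun t => (z0 - t) ^ (α - 1)) volume z z0 := by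
  simpa using (intervalIntegrable_rpow' (a := z0 - z) (b := z0 - z0) (r := α - 1)
    (by linarith)).comp_sub_left z0

lemma abs_rpow_sub_one_le_of_one_le {β t T : ℝ} (ht : 1 ≤ t) (htT : t ≤ T) :
    |t ^ β - 1| ≤ |T ^ β - 1| := by
  rcases le_or_gt 0 β with hβ | hβ
  · have h1 : 1 ≤ t ^ β := Real.one_le_rpow ht hβ
    have h2 : t ^ β ≤ T ^ β := Real.rpow_le_rpow (by linarith) htT hβ
    rw [abs_of_nonneg (by linarith), abs_of_nonneg (by linarith)]
    linarith
  · have h1 : t ^ β ≤ 1 := Real.rpow_le_one_of_one_le_of_nonpos ht hβ.le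
    have h2 : T ^ β ≤ t ^ β := Real.rpow_le_rpow_of_nonpos (by linarith) htT hβ.le
    rw [abs_of_nonpos (by linarith), abs_of_nonpos (by linarith)]
    linarith

lemma abs_rpow_sub_self_le_of_one_le {α t T : ℝ} (ht : 1 ≤ t) (htT : t ≤ T) :
    |t ^ α - t| ≤ |T ^ α - T| := by
  have factor : ∀ u : ℝ, 0 < u → u ^ α - u = u * (u ^ (α - 1) - 1) := fun u hu => by
    rw [Real.rpow_sub_one hu.ne']
    field_simp
  rw [factor t (by linarith), factor T (by linarith), abs_mul, abs_mul,
    abs_of_pos (by linarith : (0:ℝ) < t), abs_of_pos (by linarith : (0:ℝ) < T)]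
  exact mul_le_mul htT (abs_rpow_sub_one_le_of_one_le ht htT) (abs_nonneg _) (by linarith)

lemma abs_integral_kernel_le {Φ g : ℝ → ℝ} {z z0 α MΦ Mg : ℝ} (hz : 0 < z) (hzz0 : z ≤ z0)
    (hα : 0 < α) (hΦ : ∀ t ∈ Icc (0:ℝ) 1, |Φ t| ≤ MΦ)
    (hg : ∀ z' ∈ Icc z z0, |g z'| ≤ Mg) :
    |∫ z' in z..z0, Φ (z / z') * z' ^ (-(2:ℝ)) * (z0 - z') ^ (α - 1) * g z'|
      ≤ MΦ * Mg / α * z ^ (-(2:ℝ)) * (z0 - z) ^ α := by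
  have hMΦ : 0 ≤ MΦ := (abs_nonneg _).trans (hΦ 0 ⟨le_rfl, zero_le_one⟩)
  have hMg : 0 ≤ Mg := (abs_nonneg _).trans (hg z ⟨le_rfl, hzz0⟩)
  have pointwise : ∀ z' ∈ Ioc z z0,
      |Φ (z / z') * z' ^ (-(2:ℝ)) * (z0 - z') ^ (α - 1) * g z'|
        ≤ MΦ * Mg * z ^ (-(2:ℝ)) * (z0 - z') ^ (α - 1) := by
    rintro z' ⟨hzz', hz'z0⟩
    have hz' : 0 < z' := hz.trans hzz'
    have hΦz : |Φ (z / z')| ≤ MΦ := hΦ _ ⟨by positivity, (div_le_one hz').mpr hzz'.le⟩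
    have hpow : z' ^ (-(2:ℝ)) ≤ z ^ (-(2:ℝ)) :=
      Real.rpow_le_rpow_of_nonpos hz hzz'.le (by norm_num)
    have hgz : |g z'| ≤ Mg := hg z' ⟨hzz'.le, hz'z0⟩
    rw [abs_mul, abs_mul, abs_mul, abs_of_nonneg (by positivity : (0:ℝ) ≤ z' ^ (-(2:ℝ))),
      abs_of_nonneg (Real.rpow_nonneg (sub_nonneg.mpr hz'z0) _)]

    calc |Φ (z / z')| * z' ^ (-(2:ℝ)) * (z0 - z') ^ (α - 1) * |g z'|
        ≤ MΦ * z ^ (-(2:ℝ)) * (z0 - z') ^ (α - 1) * Mg := by gcongr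
      _ = MΦ * Mg * z ^ (-(2:ℝ)) * (z0 - z') ^ (α - 1) := by ring
  rw [← Real.norm_eq_abs]
  calc _ ≤ ∫ z' in z..z0, MΦ * Mg * z ^ (-(2:ℝ)) * (z0 - z') ^ (α - 1) :=
        norm_integral_le_of_norm_le hzz0 (ae_of_all _ pointwise)
          ((intervalIntegrable_sub_rpow_sub_one z z0 hα).const_mul _)
    _ = MΦ * Mg / α * z ^ (-(2:ℝ)) * (z0 - z) ^ α := by
        rw [intervalIntegral.integral_const_mul, integral_sub_rpow_sub_one z z0 hα]
        ring

lemma abs_integral_outer_le {I : ℝ → ℝ} {x z0 α C : ℝ} (hx : 0 < x) (hxz0 : x ≤ z0)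
    (hα1 : α ≠ 1) (hI : ∀ z ∈ Ioo x z0, |I z| ≤ C * z ^ (-(2:ℝ)) * (z0 - z) ^ α) :
    |∫ z in x..z0, (z / (z0 - z)) ^ α * I z| ≤ C * ((z0 ^ (α - 1) - x ^ (α - 1)) / (α - 1)) := by
  have pointwise : ∀ z ∈ Ioo x z0, |(z / (z0 - z)) ^ α * I z| ≤ C * z ^ (α - 2) := by
    rintro z hz
    have hz0 : 0 < z := hx.trans hz.1
    have hw : 0 < z0 - z := sub_pos.mpr hz.2
    rw [abs_mul, abs_of_nonneg (by positivity), Real.div_rpow hz0.le hw.le]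
    calc z ^ α / (z0 - z) ^ α * |I z|
        ≤ z ^ α / (z0 - z) ^ α * (C * z ^ (-(2:ℝ)) * (z0 - z) ^ α) := by gcongr; exact hI z hz
      _ = C * z ^ (α - 2) := by
        rw [sub_eq_add_neg α, Real.rpow_add hz0]
        field_simp
  have hpow : (0:ℝ) ∉ uIcc x z0 := notMem_uIcc_of_lt hx (hx.trans_le hxz0)
  rw [← Real.norm_eq_abs]
  -- At `z = z0` the weight `(z / (z0 - z)) ^ α` takes a junk value; that point is null.
  calc _ ≤ ∫ z in x..z0, C * z ^ (α - 2) :=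
        norm_integral_le_of_norm_le hxz0
          ((Measure.ae_ne volume z0).mono fun z hne hz => pointwise z ⟨hz.1, lt_of_le_of_ne hz.2 hne⟩)
          ((intervalIntegral.intervalIntegrable_rpow (Or.inr hpow)).const_mul _)
    _ = C * ((z0 ^ (α - 1) - x ^ (α - 1)) / (α - 1)) := by
        rw [intervalIntegral.integral_const_mul,
          integral_rpow (Or.inr ⟨fun h => hα1 (by linarith), hpow⟩)]
        ring_nf

theorem stmt_1_general (z0 a α MΦ Mg : ℝ) (Φ g : ℝ → ℝ)
    (ha : 0 < a) (haz0 : a < z0) (hα : 0 < α) (hα1 : α ≠ 1)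
    (hΦ : ∀ t ∈ Icc (0:ℝ) 1, |Φ t| ≤ MΦ)
    (hg : ∀ z ∈ Icc a z0, |g z| ≤ Mg) :
    ∀ x ∈ Icc a z0,
      |(α * z0 / x ^ α) *
          ∫ z in z0..x, (z / (z0 - z)) ^ α *
            ∫ z' in z..z0, Φ (z / z') * (z') ^ (-(2:ℝ)) * (z0 - z') ^ (α - 1) * g z'|
        ≤ (1 / |α - 1|) * MΦ * |z0 / a - (z0 / a) ^ α| * Mg := by
  rintro x ⟨hax, hxz0⟩
  have hx : 0 < x := ha.trans_le hax
  have hz0 : 0 < z0 := ha.trans haz0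
  have hM : 0 ≤ MΦ * Mg := mul_nonneg ((abs_nonneg _).trans (hΦ 0 ⟨le_rfl, zero_le_one⟩))
    ((abs_nonneg _).trans (hg a ⟨le_rfl, haz0.le⟩))
  have outer := abs_integral_outer_le hx hxz0 hα1 fun z hz =>
    abs_integral_kernel_le (Φ := Φ) (g := g) (hx.trans hz.1) hz.2.le hα hΦ
      fun z' hz' => hg z' ⟨hax.trans (hz.1.le.trans hz'.1), hz'.2⟩
  have scaling : z0 * (z0 ^ (α - 1) - x ^ (α - 1)) / x ^ α = (z0 / x) ^ α - z0 / x := by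
    rw [Real.rpow_sub_one hz0.ne', Real.rpow_sub_one hx.ne', Real.div_rpow hz0.le hx.le]
    field_simp
  rw [integral_symm, abs_mul, abs_neg, abs_of_pos (by positivity)]
  calc _ ≤ α * z0 / x ^ α * (MΦ * Mg / α * ((z0 ^ (α - 1) - x ^ (α - 1)) / (α - 1))) := by
        gcongr
    _ = MΦ * Mg * (((z0 / x) ^ α - z0 / x) / (α - 1)) := by
        rw [← scaling]
        field_simp
    _ ≤ MΦ * Mg * (|(z0 / x) ^ α - z0 / x| / |α - 1|) := by
        rw [← abs_div]
        gcongr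
        exact le_abs_self _
    _ ≤ MΦ * Mg * (|(z0 / a) ^ α - z0 / a| / |α - 1|) := by
        gcongr MΦ * Mg * (?_ / _)
        exact abs_rpow_sub_self_le_of_one_le ((one_le_div hx).mpr hxz0) (by gcongr)
    _ = _ := by
        rw [abs_sub_comm]
        ring

/-- Sup-norm estimate for the operator `G` in the proof of Lemma 5.4. -/
theorem stmt_1 (z0 a α MΦ Mg : ℝ) (Φ g : ℝ → ℝ)
    (ha : 0 < a) (haz0 : a < z0) (hα : 0 < α) (hα1 : α ≠ 1)
    (hΦcont : ContinuousOn Φ (Icc 0 1))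
    (hΦ : ∀ t ∈ Icc (0:ℝ) 1, |Φ t| ≤ MΦ)
    (hgcont : ContinuousOn g (Icc a z0))
    (hg : ∀ z ∈ Icc a z0, |g z| ≤ Mg) :
    ∀ x ∈ Icc a z0,
      |(α * z0 / x ^ α) *
          ∫ z in z0..x, (z / (z0 - z)) ^ α *
            ∫ z' in z..z0, Φ (z / z') * (z') ^ (-(2:ℝ)) * (z0 - z') ^ (α - 1) * g z'|
        ≤ (1 / |α - 1|) * MΦ * |z0 / a - (z0 / a) ^ α| * Mg :=
  stmt_1_general z0 a α MΦ Mg Φ g ha haz0 hα hα1 hΦ hg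
end

section
/- Under the assumptions of the boundedness lemma for T_ξ, if additionally Re(ξ) > 2β̄ - β̲ - μ̲, then the operator norm of T_ξ on L¹_w is strictly less than 1, hence 1 lies in the resolvent set of T_ξ and I - T_ξ is invertible on L¹_w. -/
theorem stmt_7_general {X : Type*} [NormedAddCommGroup X] [NormedSpace ℝ X] [CompleteSpace X]
    (T : X →L[ℝ] X) (ξ βl μl βu : ℝ)
    (hβu : 0 ≤ βu)
    (hnorm : ‖T‖ ≤ 2 * βu / (ξ + βl + μl))
    (hξ : 2 * βu - βl - μl < ξ) :
    ‖T‖ < 1 ∧ IsUnit (1 - T : X →L[ℝ] X) := by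
  have hT : ‖T‖ < 1 := hnorm.trans_lt <| (div_lt_one (by linarith)).2 (by linarith)
  exact ⟨hT, (Units.oneSub T hT).isUnit⟩

/-- Lemma 4.3 (Lem-Res): if `Re ξ > 2β̄ - β̲ - μ̲` then `‖T_ξ‖ < 1` and `I - T_ξ`
is invertible (Neumann series). Stated for a bounded operator `T` on the Banach
space `L¹_w` satisfying the norm bound of Lemma 4.1. -/
theorem stmt_7 {X : Type*} [NormedAddCommGroup X] [NormedSpace ℝ X] [CompleteSpace X]
    (T : X →L[ℝ] X) (ξ βl μl βu : ℝ)
    (hlow : 0 < βl + μl) (hβu : 0 ≤ βu)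
    (hnorm : ‖T‖ ≤ 2 * βu / (ξ + βl + μl))
    (hξ : 2 * βu - βl - μl < ξ) :
    ‖T‖ < 1 ∧ IsUnit (1 - T : X →L[ℝ] X) :=
  stmt_7_general T ξ βl μl βu hβu hnorm hξ
end

section
/- Let z_0 ≥ m > 0, b_0 > 0, b(z) = (b_0/z_0) z(z_0 - z), and suppose β_m, μ are measurable with μ̲ - μ̄ + β_m(y) ≥ C > 0 for all y ∈ [0, z_0]. Then ∫_0^{z_0} ∫_{z'}^{z_0} exp(-∫_{z'}^z (μ̲ - μ̄ + β_m(y))/b(y) dy) · (1/b(z)) dz dz' ≤ z_0/C < ∞. -/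
/-!
Since `μ̲ - μ̄ + β_m ≥ C` on `[0, z0]`, the integrand of the inner integral is at most
`exp (-C ∫_{z'}^z 1/b) / b(z)`, the derivative of `-(1/C) exp (-C ∫_{z'}^z 1/b)`; hence each inner
integral is at most `1/C` and the outer one at most `z0/C`. The exponent `∫_{z'}^z (…)/b` could only
fail to exist (and take the junk value `0`) if the integrand were `1/b` near `z0`, which is not
integrable there because `1/b(z) ≍ 1/(z0 - z)`.
-/

open MeasureTheory intervalIntegral Set Filter Topology

section ExpIntegralBound

variable {w f : ℝ → ℝ} {a t c C : ℝ}

theorem continuousOn_primitive_Icc (hat : a ≤ t) (hf : IntervalIntegrable f volume a t) :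
    ContinuousOn (fun z => ∫ y in a..z, f y) (Icc a t) := by
  simpa only [uIcc_of_le hat] using continuousOn_primitive_interval' hf left_mem_uIcc

theorem integral_exp_neg_mul_primitive_mul_le (hC : 0 < C) (hat : a ≤ t)
    (hw : ContinuousOn w (Icc a t)) :
    ∫ z in a..t, Real.exp (-(C * ∫ y in a..z, w y)) * w z ≤ 1 / C := by
  set J : ℝ → ℝ := fun z => ∫ y in a..z, w y
  have hJ : ContinuousOn J (Icc a t) :=
    continuousOn_primitive_Icc hat (hw.intervalIntegrable_of_Icc hat)
  have hJ' : ∀ z ∈ Ioo a t, HasDerivAt J (w z) z := fun z hz =>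
    integral_hasDerivAt_right
      ((hw.mono (Icc_subset_Icc_right hz.2.le)).intervalIntegrable_of_Icc hz.1.le)
      ((hw.mono Ioo_subset_Icc_self).stronglyMeasurableAtFilter isOpen_Ioo z hz)
      (hw.continuousAt (Icc_mem_nhds hz.1 hz.2))
  have hE : ContinuousOn (fun z => Real.exp (-(C * J z))) (Icc a t) := by fun_prop
  have hFTC := integral_eq_sub_of_hasDerivAt_of_le
    (f := fun z => -(1 / C) * Real.exp (-(C * J z)))
    (f' := fun z => Real.exp (-(C * J z)) * w z) hat (by fun_prop)
    (fun z hz => (((hJ' z hz).const_mul C).neg.exp.const_mul (-(1 / C))).congr_deriv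
      (by simp only [Pi.neg_apply]; field_simp))
    ((hE.mul hw).intervalIntegrable_of_Icc hat)
  have hJa : J a = 0 := integral_same
  rw [hFTC, hJa, mul_zero, neg_zero, Real.exp_zero]
  nlinarith [Real.exp_pos (-(C * J t)), one_div_pos.2 hC]

theorem integral_exp_neg_integral_mul_le (hC : 0 < C) (hat : a ≤ t)
    (hw : ContinuousOn w (Icc a t)) (hw0 : ∀ z ∈ Icc a t, 0 ≤ w z)
    (hwf : ∀ y ∈ Icc a t, C * w y ≤ f y) (hf : IntervalIntegrable f volume a t) :
    ∫ z in a..t, Real.exp (-∫ y in a..z, f y) * w z ≤ 1 / C := by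
  have hF := continuousOn_primitive_Icc hat hf
  have hW := continuousOn_primitive_Icc hat (hw.intervalIntegrable_of_Icc hat)
  refine le_trans (integral_mono_on hat (ContinuousOn.intervalIntegrable_of_Icc hat (by fun_prop))
    (ContinuousOn.intervalIntegrable_of_Icc hat (by fun_prop)) fun z hz => ?_)
    (integral_exp_neg_mul_primitive_mul_le hC hat hw)
  have hwz := hw.mono (Icc_subset_Icc_right hz.2)
  have hfz : IntervalIntegrable f volume a z :=
    hf.mono_set (uIcc_subset_uIcc left_mem_uIcc (mem_uIcc_of_le hz.1 hz.2))
  gcongr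
  · exact hw0 z hz
  rw [← intervalIntegral.integral_const_mul]
  exact integral_mono_on hz.1 ((hwz.intervalIntegrable_of_Icc hz.1).const_mul C) hfz
    fun y hy => hwf y ⟨hy.1, hy.2.trans hz.2⟩

theorem integral_le_of_forall_integral_Ico_le {g : ℝ → ℝ} {M : ℝ} (hac : a < c)
    (hg : IntervalIntegrable g volume a c) (h : ∀ t ∈ Ico a c, ∫ z in a..t, g z ≤ M) :
    ∫ z in a..c, g z ≤ M := by
  have : (𝓝[Ico a c] c).NeBot := mem_closure_iff_nhdsWithin_neBot.1
    (by rw [closure_Ico hac.ne]; exact right_mem_Icc.2 hac.le)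
  exact le_of_tendsto (((continuousOn_primitive_Icc hac.le hg) c (right_mem_Icc.2 hac.le)).mono
    Ico_subset_Icc_self) (eventually_nhdsWithin_of_forall h)

-- Where `∫ y in a..z, f y` is the junk value `0`, the integrand reduces to `w z`.
theorem IntervalIntegrable.of_exp_neg_integral_mul
    (hg : IntervalIntegrable (fun z => Real.exp (-∫ y in a..z, f y) * w z) volume a c)
    (ht : t ∈ Icc a c) (hf : ¬ IntervalIntegrable f volume a t) :
    IntervalIntegrable w volume t c := by
  have hg' : IntervalIntegrable (fun z => Real.exp (-∫ y in a..z, f y) * w z) volume t c :=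
    hg.mono_set (uIcc_subset_uIcc (mem_uIcc_of_le ht.1 ht.2) right_mem_uIcc)
  refine hg'.congr fun z hz => ?_
  rw [uIoc_of_le ht.2] at hz
  have hfz : ¬ IntervalIntegrable f volume a z := fun h =>
    hf (h.mono_set (uIcc_subset_uIcc left_mem_uIcc (mem_uIcc_of_le ht.1 hz.1.le)))
  simp only [integral_undef hfz, neg_zero, Real.exp_zero, one_mul]

theorem integral_exp_neg_integral_mul_le_of_not_intervalIntegrable (hC : 0 < C) (hac : a ≤ c)
    (hw : ContinuousOn w (Ico a c)) (hw0 : ∀ z ∈ Ico a c, 0 ≤ w z)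
    (hwf : ∀ y ∈ Ico a c, C * w y ≤ f y)
    (hw_int : ∀ t ∈ Ico a c, ¬ IntervalIntegrable w volume t c) :
    ∫ z in a..c, Real.exp (-∫ y in a..z, f y) * w z ≤ 1 / C := by
  rcases hac.eq_or_lt with rfl | hac
  · simpa only [integral_same] using one_div_nonneg.2 hC.le
  by_cases hg : IntervalIntegrable (fun z => Real.exp (-∫ y in a..z, f y) * w z) volume a c
  swap
  · simpa only [integral_undef hg] using one_div_nonneg.2 hC.le
  refine integral_le_of_forall_integral_Ico_le hac hg fun t ht => ?_
  have hsub : Icc a t ⊆ Ico a c := Icc_subset_Ico_right ht.2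
  refine integral_exp_neg_integral_mul_le hC ht.1 (hw.mono hsub) (fun z hz => hw0 z (hsub hz))
    (fun y hy => hwf y (hsub hy)) ?_
  by_contra hf
  exact hw_int t ht (hg.of_exp_neg_integral_mul ⟨ht.1, ht.2.le⟩ hf)

end ExpIntegralBound

section Logistic

variable {k z0 t : ℝ}

theorem continuousOn_one_div_logistic (hk : k ≠ 0) :
    ContinuousOn (fun z => 1 / (k * z * (z0 - z))) (Ioo 0 z0) :=
  continuousOn_const.div (by fun_prop) fun z hz =>
    mul_ne_zero (mul_ne_zero hk hz.1.ne') (sub_ne_zero.2 hz.2.ne')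

-- On `(0, z0]` the function dominates `(z0 - z)⁻¹ / (k * z0)`.
theorem not_intervalIntegrable_one_div_logistic (hk : 0 < k) (ht : 0 ≤ t) (htz : t < z0) :
    ¬ IntervalIntegrable (fun z => 1 / (k * z * (z0 - z))) volume t z0 := by
  intro h
  have hinv : IntervalIntegrable (fun z => (z - z0)⁻¹) volume t z0 := by
    refine (h.const_mul (k * z0)).mono_fun (by fun_prop) ?_
    rw [uIoc_of_le htz.le]
    refine ae_restrict_of_forall_mem measurableSet_Ioc fun z hz => ?_
    rcases hz.2.eq_or_lt with rfl | hzz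
    · simp
    have hz : 0 < z := ht.trans_lt hz.1
    have hzz' : 0 < z0 - z := sub_pos.2 hzz
    calc ‖(z - z0)⁻¹‖ = 1 * (z0 - z)⁻¹ := by
          rw [Real.norm_eq_abs, ← neg_sub, inv_neg, abs_neg, abs_of_pos (inv_pos.2 hzz'), one_mul]
      _ ≤ z0 / z * (z0 - z)⁻¹ := by gcongr; exact (one_le_div hz).2 (by linarith)
      _ = k * z0 * (1 / (k * z * (z0 - z))) := by field_simp
      _ ≤ ‖k * z0 * (1 / (k * z * (z0 - z)))‖ := Real.le_norm_self _
  simp [intervalIntegrable_sub_inv_iff, htz.ne] at hinv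

end Logistic

theorem stmt_12_general (z0 m b0 C μl μu : ℝ) (βm : ℝ → ℝ)
    (hm : 0 < m) (hmz0 : m ≤ z0) (hb0 : 0 < b0) (hC : 0 < C)
    (hlower : ∀ y ∈ Icc (0:ℝ) z0, C ≤ μl - μu + βm y) :
    (∫ z' in (0:ℝ)..z0,
        ∫ z in z'..z0,
          Real.exp (-∫ y in z'..z, (μl - μu + βm y) / ((b0 / z0) * y * (z0 - y))) *
            (1 / ((b0 / z0) * z * (z0 - z))))
      ≤ z0 / C := by
  have hz0 : 0 < z0 := hm.trans_le hmz0
  have hk : 0 < b0 / z0 := div_pos hb0 hz0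
  have hb : ∀ y ∈ Icc 0 z0, 0 ≤ b0 / z0 * y * (z0 - y) := fun y hy =>
    mul_nonneg (mul_nonneg hk.le hy.1) (sub_nonneg.2 hy.2)
  have inner : ∀ z' ∈ uIoc 0 z0, ‖∫ z in z'..z0,
      Real.exp (-∫ y in z'..z, (μl - μu + βm y) / ((b0 / z0) * y * (z0 - y))) *
        (1 / ((b0 / z0) * z * (z0 - z)))‖ ≤ 1 / C := by
    rw [uIoc_of_le hz0.le]
    rintro z' ⟨hz', hz'z0⟩
    have hsub : Icc z' z0 ⊆ Icc 0 z0 := Icc_subset_Icc_left hz'.le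
    rw [Real.norm_of_nonneg (integral_nonneg hz'z0 fun z hz =>
      mul_nonneg (Real.exp_nonneg _) (one_div_nonneg.2 (hb z (hsub hz))))]
    refine integral_exp_neg_integral_mul_le_of_not_intervalIntegrable hC hz'z0
      ((continuousOn_one_div_logistic hk.ne').mono (Ico_subset_Ioo_left hz'))
      (fun z hz => one_div_nonneg.2 (hb z (hsub (Ico_subset_Icc_self hz))))
      (fun y hy => ?_)
      fun t ht => not_intervalIntegrable_one_div_logistic hk (hz'.le.trans ht.1) ht.2
    replace hy := hsub (Ico_subset_Icc_self hy)
    rw [mul_one_div]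
    exact div_le_div_of_nonneg_right (hlower y hy) (hb y hy)
  calc _ ≤ ‖_‖ := Real.le_norm_self _
    _ ≤ 1 / C * |z0 - 0| := norm_integral_le_of_norm_le_const inner
    _ = z0 / C := by rw [sub_zero, abs_of_pos hz0]; ring

/-- Example 3.3(a): verification of Assumption (A5) for logistic growth. -/
theorem stmt_12 (z0 m b0 C μl μu : ℝ) (βm : ℝ → ℝ)
    (hm : 0 < m) (hmz0 : m ≤ z0) (hb0 : 0 < b0) (hC : 0 < C)
    (hβm : Measurable βm)
    (hlower : ∀ y ∈ Icc (0:ℝ) z0, C ≤ μl - μu + βm y) :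
    (∫ z' in (0:ℝ)..z0,
        ∫ z in z'..z0,
          Real.exp (-∫ y in z'..z, (μl - μu + βm y) / ((b0 / z0) * y * (z0 - y))) *
            (1 / ((b0 / z0) * z * (z0 - z))))
      ≤ z0 / C :=
  stmt_12_general z0 m b0 C μl μu βm hm hmz0 hb0 hC hlower
end
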